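/- arXiv:2504.01280 — 4 statements merged into one kernel-verified Lean document; each statement's English description precedes it below -/
import Mathlib

section
/- There exist a finite marriage market and an individually rational matching μ such that no finite sequence of matchings μ = μ_1, μ_2, …, μ_k ending in a stable matching μ_k has the property that for each i, μ_{i+1} is obtained from μ_i by satisfying a blocking pair of μ_i that is mutually optimal whenever μ_i admits at least one mutually optimal blocking pair. In other words, there is no decentralized process of satisfying blocking pairs that always chooses mutually optimal blocking pairs when they exist and always reaches a stable matching. -/
namespace Marriage

/-- A marriage market: disjoint sets of men `M` and women `W`, each man `m` with a strict
(linear) preference order on `W ∪ {m}` (encoded as `Option W`, where `none` stands for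
staying single, i.e. being matched to himself), and likewise for women. -/
structure Market (M W : Type*) where
  prefM : M → Option W → Option W → Prop
  prefW : W → Option M → Option M → Prop
  prefM_sto : ∀ m, IsStrictTotalOrder (Option W) (prefM m)
  prefW_sto : ∀ w, IsStrictTotalOrder (Option M) (prefW w)

/-- A matching: `f m = some w` iff `m` is matched to `w` iff `g w = some m`;
`f m = none` (resp. `g w = none`) means the player is unmatched (matched to themself). -/
structure Matching (M W : Type*) where
  f : M → Option W
  g : W → Option M
  consistent : ∀ m w, f m = some w ↔ g w = some m

variable {M W : Type*}

/-- `(m, w)` is a blocking pair of `μ`. -/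
def IsBlocking (E : Market M W) (μ : Matching M W) (m : M) (w : W) : Prop :=
  μ.f m ≠ some w ∧ E.prefM m (some w) (μ.f m) ∧ E.prefW w (some m) (μ.g w)

/-- `μ` is individually rational: no player strictly prefers being single to their match. -/
def IndivRational (E : Market M W) (μ : Matching M W) : Prop :=
  (∀ m, ¬ E.prefM m none (μ.f m)) ∧ (∀ w, ¬ E.prefW w none (μ.g w))

/-- `μ` is stable: individually rational and without blocking pairs. -/
def IsStable (E : Market M W) (μ : Matching M W) : Prop :=
  IndivRational E μ ∧ ∀ m w, ¬ IsBlocking E μ m w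

/-- `μ'` is obtained from `μ` by satisfying the pair `(m, w)`: `m` and `w` get matched to
each other, their former partners (if any) become unmatched, everyone else keeps their
partner. -/
def Satisfies (μ μ' : Matching M W) (m : M) (w : W) : Prop :=
  μ'.f m = some w ∧ μ'.g w = some m ∧
  (∀ m', m' ≠ m → μ.f m' = some w → μ'.f m' = none) ∧
  (∀ m', m' ≠ m → μ.f m' ≠ some w → μ'.f m' = μ.f m') ∧
  (∀ w', w' ≠ w → μ.g w' = some m → μ'.g w' = none) ∧
  (∀ w', w' ≠ w → μ.g w' ≠ some m → μ'.g w' = μ.g w')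

/-- A blocking pair `(m, w)` of `μ` that is optimal for the man `m`. -/
def OptimalForM (E : Market M W) (μ : Matching M W) (m : M) (w : W) : Prop :=
  IsBlocking E μ m w ∧
  ∀ w', IsBlocking E μ m w' → w' ≠ w → E.prefM m (some w) (some w')

/-- A blocking pair `(m, w)` of `μ` that is optimal for the woman `w`. -/
def OptimalForW (E : Market M W) (μ : Matching M W) (m : M) (w : W) : Prop :=
  IsBlocking E μ m w ∧
  ∀ m', IsBlocking E μ m' w → m' ≠ m → E.prefW w (some m) (some m')

/-- A mutually optimal blocking pair of `μ`. -/
def MutuallyOptimal (E : Market M W) (μ : Matching M W) (m : M) (w : W) : Prop :=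
  OptimalForM E μ m w ∧ OptimalForW E μ m w

/-! In a suitable market with four men and four women, the initial matching has exactly one
mutually optimal blocking pair, and satisfying it leads to a matching that again has exactly
one. Following these forced steps, the dynamics runs through a cycle of eight unstable matchings
back to `μinit`. Since the cycle is closed under every step the rule allows, a stable matching
is never reached. -/

theorem Matching.ext {μ₁ μ₂ : Matching M W} (hf : μ₁.f = μ₂.f) (hg : μ₁.g = μ₂.g) :
    μ₁ = μ₂ := by
  cases μ₁; cases μ₂; simp_all

theorem Satisfies.unique {μ μ₁ μ₂ : Matching M W} {m : M} {w : W}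
    (h₁ : Satisfies μ μ₁ m w) (h₂ : Satisfies μ μ₂ m w) : μ₁ = μ₂ := by
  obtain ⟨hm₁, hw₁, hpartnerM₁, hotherM₁, hpartnerW₁, hotherW₁⟩ := h₁
  obtain ⟨hm₂, hw₂, hpartnerM₂, hotherM₂, hpartnerW₂, hotherW₂⟩ := h₂
  refine Matching.ext (funext fun m' => ?_) (funext fun w' => ?_)
  · by_cases hm : m' = m
    · rw [hm, hm₁, hm₂]
    · by_cases hf : μ.f m' = some w
      · rw [hpartnerM₁ m' hm hf, hpartnerM₂ m' hm hf]
      · rw [hotherM₁ m' hm hf, hotherM₂ m' hm hf]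
  · by_cases hw : w' = w
    · rw [hw, hw₁, hw₂]
    · by_cases hg : μ.g w' = some m
      · rw [hpartnerW₁ w' hw hg, hpartnerW₂ w' hw hg]
      · rw [hotherW₁ w' hw hg, hotherW₂ w' hw hg]

def PrioritizedStep (E : Market M W) (μ μ' : Matching M W) : Prop :=
  ∃ m w, IsBlocking E μ m w ∧ Satisfies μ μ' m w ∧
    ((∃ m' w', MutuallyOptimal E μ m' w') → MutuallyOptimal E μ m w)

theorem chain_mem_of_closed {α : Type*} {r : α → α → Prop} {S : Set α}
    (hS : ∀ a ∈ S, ∀ b, r a b → b ∈ S) {k : ℕ} (seq : Fin (k + 1) → α) (h₀ : seq 0 ∈ S)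
    (hstep : ∀ i : Fin k, r (seq i.castSucc) (seq i.succ)) (i : Fin (k + 1)) : seq i ∈ S := by
  induction i using Fin.induction with
  | zero => exact h₀
  | succ i ih => exact hS _ ih _ (hstep i)

def Market.ofRank (rankM : M → Option W → ℕ) (rankW : W → Option M → ℕ)
    (hM : ∀ m, (rankM m).Injective) (hW : ∀ w, (rankW w).Injective) : Market M W where
  prefM m a b := rankM m a < rankM m b
  prefW w a b := rankW w a < rankW w b
  prefM_sto m := (hM m).isStrictTotalOrder_onFun (r := (· < ·))
  prefW_sto w := (hW w).isStrictTotalOrder_onFun (r := (· < ·))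

instance (rankM : M → Option W → ℕ) (rankW : W → Option M → ℕ) hM hW (m : M) :
    DecidableRel ((Market.ofRank rankM rankW hM hW).prefM m) :=
  fun a b => inferInstanceAs (Decidable (rankM m a < rankM m b))

instance (rankM : M → Option W → ℕ) (rankW : W → Option M → ℕ) hM hW (w : W) :
    DecidableRel ((Market.ofRank rankM rankW hM hW).prefW w) :=
  fun a b => inferInstanceAs (Decidable (rankW w a < rankW w b))

-- Lower rank is preferred; staying single (rank 4) is everyone's last choice.
def rankM : Fin 4 → Option (Fin 4) → ℕ
  | _, none => 4
  | m, some w => ![![3, 1, 2, 0], ![2, 1, 3, 0], ![1, 2, 0, 3], ![1, 3, 0, 2]] m w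

def rankW : Fin 4 → Option (Fin 4) → ℕ
  | _, none => 4
  | w, some m => ![![0, 1, 3, 2], ![3, 2, 1, 0], ![0, 1, 2, 3], ![2, 3, 1, 0]] w m

abbrev cycleMarket : Market (Fin 4) (Fin 4) :=
  Market.ofRank rankM rankW (by unfold Function.Injective; decide)
    (by unfold Function.Injective; decide)

def mkMatching (f g : Fin 4 → Option (Fin 4))
    (h : ∀ m w, f m = some w ↔ g w = some m := by decide) : Matching (Fin 4) (Fin 4) :=
  ⟨f, g, h⟩

def μinit : Matching (Fin 4) (Fin 4) :=
  mkMatching ![some 2, none, some 1, some 0] ![some 3, some 2, some 0, none]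

-- After each entry, its unique mutually optimal blocking pair; satisfying it gives the next entry.
def trapCycle : List (Matching (Fin 4) (Fin 4)) :=
  [ μinit, -- (0, 3)
    mkMatching ![some 3, none, some 1, some 0] ![some 3, some 2, none, some 0], -- (1, 0)
    mkMatching ![some 3, some 0, some 1, none] ![some 1, some 2, none, some 0], -- (2, 2)
    mkMatching ![some 3, some 0, some 2, none] ![some 1, none, some 2, some 0], -- (3, 3)
    mkMatching ![none, some 0, some 2, some 3] ![some 1, none, some 2, some 3], -- (1, 1)
    mkMatching ![none, some 1, some 2, some 3] ![none, some 1, some 2, some 3], -- (0, 2)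
    mkMatching ![some 2, some 1, none, some 3] ![none, some 1, some 0, some 3], -- (3, 0)
    mkMatching ![some 2, some 1, none, some 0] ![some 3, some 1, some 0, none] ] -- (2, 1)

theorem indivRational_μinit : IndivRational cycleMarket μinit := by
  unfold IndivRational; decide

theorem not_isStable_of_mem_trapCycle : ∀ μ ∈ trapCycle, ¬ IsStable cycleMarket μ := by
  unfold IsStable IndivRational IsBlocking; decide

set_option synthInstance.maxSize 100000 in
theorem mem_trapCycle_of_prioritizedStep :
    ∀ μ ∈ trapCycle, ∀ μ', PrioritizedStep cycleMarket μ μ' → μ' ∈ trapCycle := by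
  have hsucc : ∀ μ ∈ trapCycle, ∀ m w, IsBlocking cycleMarket μ m w →
      ((∃ m' w', MutuallyOptimal cycleMarket μ m' w') → MutuallyOptimal cycleMarket μ m w) →
      ∃ μ' ∈ trapCycle, Satisfies μ μ' m w := by
    unfold MutuallyOptimal OptimalForM OptimalForW IsBlocking Satisfies; decide
  rintro μ hμ μ' ⟨m, w, hblock, hsat, hprio⟩
  obtain ⟨μ'', hμ'', hsat'⟩ := hsucc μ hμ m w hblock hprio
  rwa [hsat.unique hsat']

/-- There exist a finite marriage market and an individually rational matching `μ0` such
that no finite sequence of matchings starting at `μ0` and ending in a stable matching has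
the property that each step satisfies a blocking pair which is mutually optimal whenever
the current matching admits at least one mutually optimal blocking pair. -/
theorem no_deterministic_mutually_optimal_path_to_stability :
    ∃ (M W : Type) (_ : Fintype M) (_ : Fintype W) (_ : Nonempty M) (_ : Nonempty W)
      (E : Market M W) (μ0 : Matching M W),
      IndivRational E μ0 ∧
      ¬ ∃ (k : ℕ) (seq : Fin (k + 1) → Matching M W),
          seq 0 = μ0 ∧ IsStable E (seq (Fin.last k)) ∧
          ∀ i : Fin k, ∃ m w,
            IsBlocking E (seq i.castSucc) m w ∧
            Satisfies (seq i.castSucc) (seq i.succ) m w ∧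
            ((∃ m' w', MutuallyOptimal E (seq i.castSucc) m' w') →
              MutuallyOptimal E (seq i.castSucc) m w) := by
  refine ⟨Fin 4, Fin 4, inferInstance, inferInstance, ⟨0⟩, ⟨0⟩, cycleMarket, μinit,
    indivRational_μinit, ?_⟩
  rintro ⟨k, seq, h₀, hstable, hstep⟩
  have hmem := chain_mem_of_closed (r := PrioritizedStep cycleMarket)
    mem_trapCycle_of_prioritizedStep seq (h₀ ▸ List.mem_cons_self) hstep
  exact not_isStable_of_mem_trapCycle _ (hmem (Fin.last k)) hstable

end Marriage
end

section
/- For every finite marriage market and every matching μ, if (m,w) is a blocking pair of μ with w matched in μ (that is, μ(w) ≠ w), and μ' is the matching obtained from μ by satisfying (m,w), then Φ(μ') ≤ Φ(μ) − 1, where Φ is the potential function defined below. -/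
namespace Marriage

variable {M W : Type*}

/-- The payoff of woman `w` in matching `μ`: the number of elements of `M ∪ {w}` that are
strictly worse than her partner `μ(w)` under her preference. -/
noncomputable def payoffW (E : Market M W) (μ : Matching M W) (w : W) : ℕ :=
  {a : Option M | E.prefW w (μ.g w) a}.ncard

/-- The potential `Φ(μ) = Σ_{w matched in μ} (|M| − p_w(μ))`. -/
noncomputable def potential [Fintype M] (E : Market M W) (μ : Matching M W) : ℤ :=
  ∑ᶠ w ∈ {w : W | μ.g w ≠ none}, ((Fintype.card M : ℤ) - (payoffW E μ w : ℤ))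

/-!
Satisfying `(m, w)` changes the partner of at most two women. The matched woman `w` now holds `m`,
whom she strictly prefers to her old partner, so her payoff rises and her term of the potential
drops by at least one. The former partner of `m` becomes single and leaves the sum, which removes
a nonnegative term since payoffs never exceed `|M|`. Every other term is unchanged.
-/

section StrictOrder

variable {α : Type*} (r : α → α → Prop) [Finite α]

theorem ncard_setOf_rel_lt_card [Std.Irrefl r] (x : α) : {a | r x a}.ncard < Nat.card α :=
  Set.ncard_lt_card fun h => irrefl x (h.symm ▸ Set.mem_univ x : x ∈ {a | r x a})

theorem ncard_setOf_rel_lt_ncard [IsStrictOrder α r] {x y : α} (h : r y x) :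
    {a | r x a}.ncard < {a | r y a}.ncard :=
  Set.ncard_lt_ncard <|
    LE.le.ssubset_of_mem_notMem (fun _ ha => _root_.trans h ha) h (irrefl x)

end StrictOrder

theorem payoffW_le_card [Fintype M] (E : Market M W) (ν : Matching M W) (w : W) :
    payoffW E ν w ≤ Fintype.card M := by
  have := E.prefW_sto w
  have h := ncard_setOf_rel_lt_card (E.prefW w) (ν.g w)
  rw [Nat.card_eq_fintype_card, Fintype.card_option] at h
  exact Nat.lt_succ_iff.mp h

theorem payoffW_lt_payoffW_of_prefW [Finite M] (E : Market M W) {ν ν' : Matching M W} {w : W}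
    (h : E.prefW w (ν'.g w) (ν.g w)) : payoffW E ν w < payoffW E ν' w :=
  have := E.prefW_sto w
  ncard_setOf_rel_lt_ncard (E.prefW w) h

noncomputable def potentialTerm [Fintype M] (E : Market M W) (ν : Matching M W) (w : W) : ℤ :=
  if ν.g w = none then 0 else (Fintype.card M : ℤ) - payoffW E ν w

section potentialTerm

variable [Fintype M] (E : Market M W)

theorem potentialTerm_nonneg (ν : Matching M W) (w : W) : 0 ≤ potentialTerm E ν w := by
  have := payoffW_le_card E ν w
  unfold potentialTerm
  split_ifs <;> omega

theorem potential_eq_sum_potentialTerm [Fintype W] (ν : Matching M W) :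
    potential E ν = ∑ w, potentialTerm E ν w := by
  classical
  rw [potential, finsum_mem_def, finsum_eq_sum_of_fintype]
  refine Finset.sum_congr rfl fun w _ => ?_
  by_cases h : ν.g w = none <;> simp [potentialTerm, h]

variable {μ μ' : Matching M W} {m : M} {w : W}

theorem potentialTerm_lt_of_satisfies (hsat : Satisfies μ μ' m w)
    (hpref : E.prefW w (some m) (μ.g w)) (hmatched : μ.g w ≠ none) :
    potentialTerm E μ' w < potentialTerm E μ w := by
  have hgain : payoffW E μ w < payoffW E μ' w :=
    payoffW_lt_payoffW_of_prefW E (hsat.2.1 ▸ hpref)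
  simp only [potentialTerm, hsat.2.1, hmatched, reduceCtorEq, if_false]
  omega

theorem potentialTerm_le_of_satisfies (hsat : Satisfies μ μ' m w) {w' : W} (hw' : w' ≠ w) :
    potentialTerm E μ' w' ≤ potentialTerm E μ w' := by
  by_cases hm : μ.g w' = some m
  · have hsingle : μ'.g w' = none := hsat.2.2.2.2.1 w' hw' hm
    simpa [potentialTerm, hsingle] using potentialTerm_nonneg E μ w'
  · have hkeep : μ'.g w' = μ.g w' := hsat.2.2.2.2.2 w' hw' hm
    simp only [potentialTerm, payoffW, hkeep, le_refl]

end potentialTerm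

theorem potential_decreases_of_satisfy_blocking_pair_with_matched_woman_general
    {M W : Type} [Fintype M] [Fintype W]
    (E : Market M W) (μ μ' : Matching M W) (m : M) (w : W)
    (hblock : IsBlocking E μ m w) (hmatched : μ.g w ≠ none)
    (hsat : Satisfies μ μ' m w) :
    potential E μ' ≤ potential E μ - 1 := by
  have hw := potentialTerm_lt_of_satisfies E hsat hblock.2.2 hmatched
  rw [potential_eq_sum_potentialTerm, potential_eq_sum_potentialTerm, Int.le_sub_one_iff]
  refine Finset.sum_lt_sum (fun w' _ => ?_) ⟨w, Finset.mem_univ w, hw⟩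
  rcases eq_or_ne w' w with rfl | hw'
  · exact hw.le
  · exact potentialTerm_le_of_satisfies E hsat hw'

/-- Satisfying a blocking pair `(m, w)` whose woman `w` is matched decreases the potential
by at least 1. -/
theorem potential_decreases_of_satisfy_blocking_pair_with_matched_woman
    {M W : Type} [Fintype M] [Fintype W] [Nonempty M] [Nonempty W]
    (E : Market M W) (μ μ' : Matching M W) (m : M) (w : W)
    (hblock : IsBlocking E μ m w) (hmatched : μ.g w ≠ none)
    (hsat : Satisfies μ μ' m w) :
    potential E μ' ≤ potential E μ - 1 :=
  potential_decreases_of_satisfy_blocking_pair_with_matched_woman_general E μ μ' m w hblock hmatched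
    hsat

end Marriage
end

section
/- Let μ' be a matching of a finite marriage market such that no blocking pair of μ' involves a matched woman (i.e., there is no blocking pair (m,w) of μ' with μ'(w) ≠ w). Let (m*, w*) be a blocking pair of μ' with w* unmatched in μ' that is optimal for w* (that is, m* ≻_{w*} m for every other man m forming a blocking pair with w* at μ'), and let μ'' be the matching obtained from μ' by satisfying (m*, w*). Then no blocking pair of μ'' involves a matched woman: there is no blocking pair (m,w) of μ'' with μ''(w) ≠ w. -/
/-!
Let `(m, w)` block `μ''` with `w` matched. If `w = w*`, then `m ≠ m*` kept his partner from
`μ'`, while `w*` prefers `m` to `m*` and hence to being single: so `(m, w*)` already blocked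
`μ'` and beats `m*` for `w*`, against optimality. If `w ≠ w*`, then `w` kept her partner (a
former partner of `m*` would now be single), and `(m, w)` already blocked `μ'`; for `m = m*`
this uses that `m*` prefers `w` to `w*` and `w*` to his partner in `μ'`.
-/

namespace Marriage

variable {M W : Type*}

namespace Market

variable (E : Market M W)

theorem prefM_trans (m : M) {a b c : Option W} (hab : E.prefM m a b) (hbc : E.prefM m b c) :
    E.prefM m a c :=
  haveI := E.prefM_sto m
  _root_.trans_of _ hab hbc

theorem prefW_trans (w : W) {a b c : Option M} (hab : E.prefW w a b) (hbc : E.prefW w b c) :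
    E.prefW w a c :=
  haveI := E.prefW_sto w
  _root_.trans_of _ hab hbc

theorem prefW_asymm (w : W) {a b : Option M} (hab : E.prefW w a b) : ¬ E.prefW w b a :=
  haveI := E.prefW_sto w
  asymm_of _ hab

end Market

theorem Matching.f_ne_some_of_g_eq_none (μ : Matching M W) {m : M} {w : W}
    (hw : μ.g w = none) : μ.f m ≠ some w := fun h => by
  simp [(μ.consistent m w).mp h] at hw

namespace Satisfies

variable {μ μ' : Matching M W} {m : M} {w : W}

theorem f_self (hs : Satisfies μ μ' m w) : μ'.f m = some w := hs.1

theorem g_self (hs : Satisfies μ μ' m w) : μ'.g w = some m := hs.2.1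

theorem g_eq_none_of_g_eq_some (hs : Satisfies μ μ' m w) {w' : W} (hw' : w' ≠ w)
    (h : μ.g w' = some m) : μ'.g w' = none :=
  hs.2.2.2.2.1 w' hw' h

theorem f_eq_of_ne (hs : Satisfies μ μ' m w) (hw : μ.g w = none) {m' : M} (hm' : m' ≠ m) :
    μ'.f m' = μ.f m' :=
  hs.2.2.2.1 m' hm' (μ.f_ne_some_of_g_eq_none hw)

theorem g_eq_of_ne (hs : Satisfies μ μ' m w) {w' : W} (hw' : w' ≠ w)
    (hmatched : μ'.g w' ≠ none) : μ'.g w' = μ.g w' :=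
  hs.2.2.2.2.2 w' hw' fun h => hmatched (hs.g_eq_none_of_g_eq_some hw' h)

end Satisfies

variable {E : Market M W} {μ' μ'' : Matching M W} {mstar : M} {wstar : W}

theorem not_isBlocking_of_satisfies_optimalForW (hunmatched : μ'.g wstar = none)
    (hopt : OptimalForW E μ' mstar wstar) (hsat : Satisfies μ' μ'' mstar wstar) (m : M) :
    ¬ IsBlocking E μ'' m wstar := by
  rintro ⟨hne, hm, hw⟩
  rw [hsat.g_self] at hw
  have hmne : m ≠ mstar := by
    rintro rfl
    exact hne hsat.f_self
  have hblock : IsBlocking E μ' m wstar := by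
    refine ⟨μ'.f_ne_some_of_g_eq_none hunmatched, ?_, ?_⟩
    · rwa [hsat.f_eq_of_ne hunmatched hmne] at hm
    · have hstar := hopt.1.2.2
      rw [hunmatched] at hstar ⊢
      exact E.prefW_trans wstar hw hstar
  exact E.prefW_asymm wstar hw (hopt.2 m hblock hmne)

theorem IsBlocking.of_satisfies_of_ne (hunmatched : μ'.g wstar = none)
    (hstar : IsBlocking E μ' mstar wstar) (hsat : Satisfies μ' μ'' mstar wstar)
    {m : M} {w : W} (hb : IsBlocking E μ'' m w) (hw : w ≠ wstar) (hmatched : μ''.g w ≠ none) :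
    IsBlocking E μ' m w := by
  obtain ⟨hne, hm, hwpref⟩ := hb
  have hg := hsat.g_eq_of_ne hw hmatched
  rw [hg] at hwpref
  rcases eq_or_ne m mstar with rfl | hmm
  · refine ⟨fun h => hmatched (hsat.g_eq_none_of_g_eq_some hw ((μ'.consistent m w).mp h)), ?_,
      hwpref⟩
    rw [hsat.f_self] at hm
    exact E.prefM_trans m hm hstar.2.1
  · rw [hsat.f_eq_of_ne hunmatched hmm] at hne hm
    exact ⟨hne, hm, hwpref⟩

theorem no_matched_woman_blocking_preserved_general
    {M W : Type}
    (E : Market M W) (μ' μ'' : Matching M W) (mstar : M) (wstar : W)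
    (hnone : ¬ ∃ m w, IsBlocking E μ' m w ∧ μ'.g w ≠ none)
    (hunmatched : μ'.g wstar = none)
    (hopt : OptimalForW E μ' mstar wstar)
    (hsat : Satisfies μ' μ'' mstar wstar) :
    ¬ ∃ m w, IsBlocking E μ'' m w ∧ μ''.g w ≠ none := by
  rintro ⟨m, w, hb, hmatched⟩
  rcases eq_or_ne w wstar with rfl | hw
  · exact not_isBlocking_of_satisfies_optimalForW hunmatched hopt hsat m hb
  · refine hnone ⟨m, w, IsBlocking.of_satisfies_of_ne hunmatched hopt.1 hsat hb hw hmatched, ?_⟩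
    rwa [← hsat.g_eq_of_ne hw hmatched]

/-- If no blocking pair of `μ'` involves a matched woman, and `μ''` is obtained from `μ'`
by satisfying a blocking pair `(m*, w*)` with `w*` unmatched that is optimal for `w*`,
then no blocking pair of `μ''` involves a matched woman. -/
theorem no_matched_woman_blocking_preserved
    {M W : Type} [Fintype M] [Fintype W] [Nonempty M] [Nonempty W]
    (E : Market M W) (μ' μ'' : Matching M W) (mstar : M) (wstar : W)
    (hnone : ¬ ∃ m w, IsBlocking E μ' m w ∧ μ'.g w ≠ none)
    (hunmatched : μ'.g wstar = none)
    (hopt : OptimalForW E μ' mstar wstar)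
    (hsat : Satisfies μ' μ'' mstar wstar) :
    ¬ ∃ m w, IsBlocking E μ'' m w ∧ μ''.g w ≠ none :=
  no_matched_woman_blocking_preserved_general E μ' μ'' mstar wstar hnone hunmatched hopt hsat

end Marriage
end

section
/- Under the assumptions below (awareness-monotone transitions, no redundancies, and richness), there exist a state ω ∈ Ω and a matching μ such that τ(ω,μ) = ω and μ is stable with respect to the preference profile (≻_i^ω)_{i ∈ M ∪ W} at ω, i.e., μ is individually rational and admits no blocking pair under these preferences. In particular, every finite dynamic two-sided matching game with unawareness has a self-confirming outcome: a pair of a matching that is stable at the state and a state that is absorbing given the matching. -/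
/-!
The fully aware state `ω*` is absorbing: no transition can raise anyone's awareness above `⊤`, and
by the no-redundancy assumption a state is determined by the players' awareness levels. So any
matching that is stable for the preferences at `ω*` gives a self-confirming outcome.

Stable matchings exist by Adachi's fixed-point argument. In a prematching every man and every
woman points at one of their options; ordering these by the men's preferences and against the
women's gives a finite complete lattice on which "everyone moves to the best option that the other
side leaves open" is monotone. Tarski's theorem gives a fixed point, and at a fixed point the
pointers are mutual (a matching), nobody prefers being single, and a blocking pair `(m, w)` would
be an option left open to `m` that he ranks above his choice.
-/

namespace Marriage

variable {M W : Type*}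

theorem eq_of_forall_eq_top_of_le {ι Ω L : Type*} [PartialOrder L] [OrderTop L]
    {a : ι → Ω → L} (hnored : ∀ ω ω' : Ω, ω ≠ ω' → ∃ i, a i ω ≠ a i ω') {ω ω' : Ω}
    (htop : ∀ i, a i ω = ⊤) (hle : ∀ i, a i ω ≤ a i ω') : ω' = ω := by
  by_contra hne
  obtain ⟨i, hi⟩ := hnored ω' ω hne
  exact hi (le_antisymm (le_top.trans_eq (htop i).symm) (hle i))

namespace Market

open OrderDual

variable {M W : Type*} (E : Market M W)

/-- The options `W ∪ {m}` of the man `m`, ordered by his preference (better is larger). The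
parameters `E` and `m` only serve to carry this order. -/
def ManOption (_E : Market M W) (_m : M) : Type _ := Option W

def WomanOption (_E : Market M W) (_w : W) : Type _ := Option M

noncomputable instance (m : M) : LinearOrder (E.ManOption m) :=
  haveI := E.prefM_sto m
  @linearOrderOfSTO (Option W) (Function.swap (E.prefM m)) _ (Classical.decRel _)

noncomputable instance (w : W) : LinearOrder (E.WomanOption w) :=
  haveI := E.prefW_sto w
  @linearOrderOfSTO (Option M) (Function.swap (E.prefW w)) _ (Classical.decRel _)

/-- The options of `m` that the women's choices `y` leave open to him: staying single, or a woman
who weakly prefers him to her choice. -/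
def attainableM (y : ∀ w, E.WomanOption w) (m : M) : Set (E.ManOption m) :=
  {o | ∀ w, o = some w → y w ≤ some m}

def attainableW (x : ∀ m, E.ManOption m) (w : W) : Set (E.WomanOption w) :=
  {o | ∀ m, o = some m → x m ≤ some w}

theorem none_mem_attainableM (y : ∀ w, E.WomanOption w) (m : M) :
    (none : E.ManOption m) ∈ E.attainableM y m :=
  nofun

theorem none_mem_attainableW (x : ∀ m, E.ManOption m) (w : W) :
    (none : E.WomanOption w) ∈ E.attainableW x w :=
  nofun

section Fixpoint

variable {E} {x : ∀ m, E.ManOption m} {y : ∀ w, E.WomanOption w}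

theorem some_mem_attainableM {m : M} {w : W} (h : y w ≤ some m) :
    (some w : E.ManOption m) ∈ E.attainableM y m := by
  rintro w' ⟨⟩
  exact h

theorem some_mem_attainableW {m : M} {w : W} (h : x m ≤ some w) :
    (some m : E.WomanOption w) ∈ E.attainableW x w := by
  rintro m' ⟨⟩
  exact h

theorem eq_some_iff_of_isGreatest (hx : ∀ m, IsGreatest (E.attainableM y m) (x m))
    (hy : ∀ w, IsGreatest (E.attainableW x w) (y w)) (m : M) (w : W) :
    x m = some w ↔ y w = some m :=
  ⟨fun h => le_antisymm ((hx m).1 w h) ((hy w).2 (some_mem_attainableW h.le)),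
    fun h => le_antisymm ((hy w).1 m h) ((hx m).2 (some_mem_attainableM h.le))⟩

def matchingOfIsGreatest (hx : ∀ m, IsGreatest (E.attainableM y m) (x m))
    (hy : ∀ w, IsGreatest (E.attainableW x w) (y w)) : Matching M W :=
  ⟨x, y, eq_some_iff_of_isGreatest hx hy⟩

theorem isStable_matchingOfIsGreatest (hx : ∀ m, IsGreatest (E.attainableM y m) (x m))
    (hy : ∀ w, IsGreatest (E.attainableW x w) (y w)) :
    IsStable E (matchingOfIsGreatest hx hy) := by
  refine ⟨⟨fun m => ?_, fun w => ?_⟩, fun m w ⟨_, hm, hw⟩ => ?_⟩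
  · exact not_lt.2 ((hx m).2 (E.none_mem_attainableM y m))
  · exact not_lt.2 ((hy w).2 (E.none_mem_attainableW x w))
  · exact not_lt.2 ((hx m).2 (some_mem_attainableM (le_of_lt hw))) hm

end Fixpoint

instance [Finite W] (m : M) : Finite (E.ManOption m) := inferInstanceAs (Finite (Option W))

instance [Finite M] (w : W) : Finite (E.WomanOption w) := inferInstanceAs (Finite (Option M))

noncomputable instance [Finite W] (m : M) : CompleteLinearOrder (E.ManOption m) :=
  haveI := Fintype.ofFinite (E.ManOption m)
  haveI : Nonempty (E.ManOption m) := ⟨(none : Option W)⟩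
  Fintype.toCompleteLinearOrderOfNonempty _

noncomputable instance [Finite M] (w : W) : CompleteLinearOrder (E.WomanOption w) :=
  haveI := Fintype.ofFinite (E.WomanOption w)
  haveI : Nonempty (E.WomanOption w) := ⟨(none : Option M)⟩
  Fintype.toCompleteLinearOrderOfNonempty _

/-- Ordered against the women's preferences, so that `adachiMap` is monotone: better options for
the men leave fewer options open to the women. -/
abbrev Prematching : Type _ := (∀ m, E.ManOption m) × (∀ w, E.WomanOption w)ᵒᵈ

variable [Finite M] [Finite W]

/-- Adachi's map (2000): every man moves to his best option left open by the women's choices, and every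
woman to hers left open by the men's. -/
noncomputable def adachiMap : E.Prematching →o E.Prematching where
  toFun p := (fun m => sSup (E.attainableM (ofDual p.2) m),
    toDual fun w => sSup (E.attainableW p.1 w))
  monotone' := by
    rintro ⟨x, y⟩ ⟨x', y'⟩ ⟨hx, hy⟩
    exact ⟨fun m => sSup_le_sSup fun o ho w hw => (hy w).trans (ho w hw),
      fun w => sSup_le_sSup fun o ho m hm => (hx m).trans (ho m hm)⟩

theorem isGreatest_adachiMap_fst (p : E.Prematching) (m : M) :
    IsGreatest (E.attainableM (ofDual p.2) m) ((E.adachiMap p).1 m) :=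
  ⟨Set.Nonempty.csSup_mem ⟨_, E.none_mem_attainableM _ m⟩ (Set.toFinite _), fun _ => le_sSup⟩

theorem isGreatest_adachiMap_snd (p : E.Prematching) (w : W) :
    IsGreatest (E.attainableW p.1 w) (ofDual (E.adachiMap p).2 w) :=
  ⟨Set.Nonempty.csSup_mem ⟨_, E.none_mem_attainableW _ w⟩ (Set.toFinite _), fun _ => le_sSup⟩

theorem exists_isStable : ∃ μ : Matching M W, IsStable E μ := by
  obtain ⟨p, hp⟩ : ∃ p, E.adachiMap p = p := ⟨_, OrderHom.map_lfp E.adachiMap⟩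
  have hx := E.isGreatest_adachiMap_fst p
  have hy := E.isGreatest_adachiMap_snd p
  rw [hp] at hx hy
  exact ⟨_, isStable_matchingOfIsGreatest hx hy⟩

end Market

theorem exists_self_confirming_outcome_general
    {M W Ω L : Type} [Fintype M] [Fintype W]
    [Lattice L] [OrderTop L]
    (a : M ⊕ W → Ω → L)                      -- awareness levels of players at states
    (E : Ω → Market M W)                     -- state-dependent preference profiles
    (τ : Ω → Matching M W → Ω)               -- transition function
    (hmono : ∀ (i : M ⊕ W) (ω : Ω) (μ : Matching M W), a i ω ≤ a i (τ ω μ))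
    (hnored : ∀ ω ω' : Ω, ω ≠ ω' → ∃ i : M ⊕ W, a i ω ≠ a i ω')
    (hrich : ∃ ω : Ω, ∀ i : M ⊕ W, a i ω = ⊤) :
    ∃ (ω : Ω) (μ : Matching M W), τ ω μ = ω ∧ IsStable (E ω) μ := by
  obtain ⟨ω, hω⟩ := hrich
  obtain ⟨μ, hμ⟩ := (E ω).exists_isStable
  exact ⟨ω, μ, eq_of_forall_eq_top_of_le hnored hω (hmono · ω μ), hμ⟩

/-- Every finite dynamic two-sided matching game with unawareness (awareness-monotone
transitions, no redundancies, richness) has a self-confirming outcome: a state `ω` that is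
absorbing given a matching `μ` which is stable with respect to the preferences at `ω`. -/
theorem exists_self_confirming_outcome
    {M W Ω L : Type} [Fintype M] [Fintype W] [Nonempty M] [Nonempty W]
    [Fintype Ω] [Nonempty Ω] [Fintype L] [Lattice L] [OrderTop L]
    (a : M ⊕ W → Ω → L)                      -- awareness levels of players at states
    (E : Ω → Market M W)                     -- state-dependent preference profiles
    (τ : Ω → Matching M W → Ω)               -- transition function
    (hmono : ∀ (i : M ⊕ W) (ω : Ω) (μ : Matching M W), a i ω ≤ a i (τ ω μ))
    (hnored : ∀ ω ω' : Ω, ω ≠ ω' → ∃ i : M ⊕ W, a i ω ≠ a i ω')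
    (hrich : ∃ ω : Ω, ∀ i : M ⊕ W, a i ω = ⊤) :
    ∃ (ω : Ω) (μ : Matching M W), τ ω μ = ω ∧ IsStable (E ω) μ :=
  exists_self_confirming_outcome_general a E τ hmono hnored hrich

end Marriage
end
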